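/- Let q be odd and ψ a nontrivial additive character of F_q, and fix a nonsquare ξ ∈ F_q×. For a, b, c ∈ F_q, the sum of ψ(-ax - by - cz) over all triples (x,y,z) ∈ F_q³ with y² - xz a nonsquare (i.e., in ξ(F_q×)²) equals: q(q-1)²/2 if a = b = c = 0; -q(q-1)/2 if b² - 4ac = 0 and (a,c) ≠ (0,0); 0 if b² - 4ac is a nonzero square; and q if b² - 4ac is a nonsquare. -/

import Mathlib

/-!
Sum over `z` first. The slice `z = 0` vanishes, since `y ^ 2 - x * 0` is a square. For `z ≠ 0`
the substitution `t = y ^ 2 - x * z` splits the slice into the Fourier coefficient at `a / z` of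
the set of nonsquares times the quadratic exponential sum `∑ y, ψ (-(a / z) * y ^ 2 - b * y)`.
Writing the nonsquare indicator as `(1 - χ t - [t = 0]) / 2`, with `χ` the quadratic character,
both factors are expressed through the Gauss sum `g` of `χ`. For `a ≠ 0`, `g ^ 2 = χ (-1) * q`
turns the sum over `z ≠ 0` into `-(q / 2) * (q * [Δ = 0] - 1 + χ Δ)` with
`Δ = b ^ 2 - 4 * a * c`; for `a = 0` only additive character sums remain.
-/

open scoped Classical

open Finset AddChar

lemma four_ne_zero_of_ringChar_ne_two {F : Type*} [Field F] (hF : ringChar F ≠ 2) :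
    (4 : F) ≠ 0 := by
  simpa [show (4 : F) = 2 ^ 2 by norm_num] using Ring.two_ne_zero hF

lemma sum_sum_ite_sq_sub_mul_addChar {F R : Type*} [Field F] [Fintype F] [CommRing R]
    (ψ : AddChar F R) (P : F → Prop) [DecidablePred P] {z : F} (hz : z ≠ 0) (a b c : F) :
    ∑ x : F, ∑ y : F, (if P (y ^ 2 - x * z) then ψ (-(a * x) - b * y - c * z) else 0)
      = ψ (-(c * z)) * (∑ t : F, if P t then ψ (a / z * t) else 0)
          * ∑ y : F, ψ (-a / z * y ^ 2 + -b * y) := by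
  have hsubst (y : F) : ∑ x : F, (if P (y ^ 2 - x * z) then ψ (-(a * x) - b * y - c * z) else 0)
      = ∑ t : F, ψ (-(c * z)) * (if P t then ψ (a / z * t) else 0)
          * ψ (-a / z * y ^ 2 + -b * y) := by
    rw [← ((Equiv.subLeft (y ^ 2)).trans (Equiv.divRight₀ z hz)).sum_comp]
    refine sum_congr rfl fun t _ => ?_
    simp only [Equiv.trans_apply, Equiv.subLeft_apply, Equiv.divRight₀_apply,
      div_mul_cancel₀ _ hz, sub_sub_cancel, mul_ite, ite_mul, mul_zero, zero_mul]
    congr 1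
    rw [← map_add_eq_mul, ← map_add_eq_mul]
    congr 1
    field_simp
    ring
  rw [sum_comm, mul_sum univ _ (ψ (-(c * z))), sum_mul_sum]
  conv_rhs => rw [sum_comm]
  exact sum_congr rfl fun y _ => hsubst y

section QuadraticChar

variable {F : Type*} [Field F] [Fintype F]

noncomputable def complexQuadraticChar (F : Type*) [Field F] [Fintype F] : MulChar F ℂ :=
  (quadraticChar F).ringHomComp (Int.castRingHom ℂ)

local notation "χ" => complexQuadraticChar F

lemma complexQuadraticChar_apply (t : F) : χ t = quadraticChar F t := rfl

lemma complexQuadraticChar_isQuadratic : (χ).IsQuadratic :=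
  (quadraticChar_isQuadratic F).comp _

lemma complexQuadraticChar_ne_one (hF : ringChar F ≠ 2) : χ ≠ 1 :=
  (MulChar.ringHomComp_ne_one_iff Int.cast_injective).mpr (quadraticChar_ne_one hF)

lemma complexQuadraticChar_sq {u : F} (hu : u ≠ 0) : χ (u ^ 2) = 1 := by
  simp [complexQuadraticChar_apply, quadraticChar_sq_one' hu]

lemma complexQuadraticChar_mul_sq (t : F) {u : F} (hu : u ≠ 0) : χ (t * u ^ 2) = χ t := by
  rw [map_mul, complexQuadraticChar_sq hu, mul_one]

lemma complexQuadraticChar_eq_one_of_isSquare {t : F} (ht : t ≠ 0) (hsq : IsSquare t) :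
    χ t = 1 := by
  simp [complexQuadraticChar_apply, (quadraticChar_one_iff_isSquare ht).mpr hsq]

lemma complexQuadraticChar_eq_neg_one_of_not_isSquare {t : F} (hsq : ¬ IsSquare t) :
    χ t = -1 := by
  simp [complexQuadraticChar_apply, quadraticChar_neg_one_iff_not_isSquare.mpr hsq]

lemma ite_not_isSquare_eq (t : F) :
    (if ¬ IsSquare t then 1 else 0 : ℂ) = (1 - χ t - if t = 0 then 1 else 0) / 2 := by
  rcases eq_or_ne t 0 with rfl | ht
  · simp [MulChar.map_zero]
  by_cases hsq : IsSquare t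
  · simp [complexQuadraticChar_eq_one_of_isSquare ht hsq, hsq, ht]
  · simp [complexQuadraticChar_eq_neg_one_of_not_isSquare hsq, hsq, ht]

variable {ψ : AddChar F ℂ}

lemma sum_addChar_mul (hψ : ψ.IsPrimitive) (u : F) :
    ∑ t : F, ψ (u * t) = if u = 0 then (Fintype.card F : ℂ) else 0 := by
  simp_rw [mul_comm u]
  exact_mod_cast sum_mulShift u hψ

lemma sum_complexQuadraticChar_mul_addChar_mul (hF : ringChar F ≠ 2) (u : F) :
    ∑ t : F, χ t * ψ (u * t) = χ u * gaussSum χ ψ := by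
  rcases eq_or_ne u 0 with rfl | hu
  · simp [MulChar.map_zero, MulChar.sum_eq_zero_of_ne_one (complexQuadraticChar_ne_one hF)]
  · have := gaussSum_mulShift_eq χ ψ (Units.mk0 u hu)
    rw [complexQuadraticChar_isQuadratic.inv] at this
    simpa [gaussSum] using this

lemma sum_not_isSquare_addChar_mul (hF : ringChar F ≠ 2) (hψ : ψ.IsPrimitive) (u : F) :
    ∑ t : F, (if ¬ IsSquare t then ψ (u * t) else 0)
      = ((if u = 0 then (Fintype.card F : ℂ) else 0) - χ u * gaussSum χ ψ - 1) / 2 := by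
  have hsplit (t : F) : (if ¬ IsSquare t then ψ (u * t) else 0)
      = (1 - χ t - if t = 0 then 1 else 0) / 2 * ψ (u * t) := by
    rw [← ite_not_isSquare_eq, boole_mul]
  simp_rw [hsplit, div_mul_eq_mul_div, ← sum_div, sub_mul, sum_sub_distrib, one_mul, boole_mul,
    sum_ite_eq' univ (0 : F), mem_univ, if_true, mul_zero, map_zero_eq_one, sum_addChar_mul hψ,
    sum_complexQuadraticChar_mul_addChar_mul hF]

lemma sum_addChar_mul_sq (hF : ringChar F ≠ 2) (hψ : ψ.IsPrimitive) {s : F} (hs : s ≠ 0) :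
    ∑ y : F, ψ (s * y ^ 2) = χ s * gaussSum χ ψ := by
  have hcard (t : F) : (#{y : F | y ^ 2 = t} : ℂ) = χ t + 1 := by
    have := quadraticChar_card_sqrts hF t
    rw [Set.toFinset_ofPred] at this
    rw [complexQuadraticChar_apply]
    exact_mod_cast congrArg (Int.cast : ℤ → ℂ) this
  calc ∑ y : F, ψ (s * y ^ 2)
      = ∑ t : F, ∑ y ∈ {y : F | y ^ 2 = t}, ψ (s * t) := by
        rw [← sum_fiberwise univ (fun y : F => y ^ 2) (fun y => ψ (s * y ^ 2))]
        refine sum_congr rfl fun t _ => sum_congr rfl fun y hy => ?_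
        rw [(mem_filter.mp hy).2]
    _ = ∑ t : F, χ t * ψ (s * t) + ∑ t : F, ψ (s * t) := by
        simp_rw [sum_const, nsmul_eq_mul, hcard, add_mul, one_mul, sum_add_distrib]
    _ = χ s * gaussSum χ ψ := by
        rw [sum_complexQuadraticChar_mul_addChar_mul hF, sum_addChar_mul hψ, if_neg hs, add_zero]

lemma sum_addChar_quadratic (hF : ringChar F ≠ 2) (hψ : ψ.IsPrimitive) {s : F} (hs : s ≠ 0)
    (B : F) :
    ∑ y : F, ψ (s * y ^ 2 + B * y) = χ s * gaussSum χ ψ * ψ (-(B ^ 2 / (4 * s))) := by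
  have h2 : (2 : F) ≠ 0 := Ring.two_ne_zero hF
  have h4 := four_ne_zero_of_ringChar_ne_two hF
  rw [← (Equiv.subRight (B / (2 * s))).sum_comp, ← sum_addChar_mul_sq hF hψ hs, sum_mul]
  refine sum_congr rfl fun y _ => ?_
  rw [← map_add_eq_mul, Equiv.subRight_apply]
  congr 1
  field_simp
  ring

lemma complexQuadraticChar_mul_neg_mul_gaussSum_sq (hF : ringChar F ≠ 2) (hψ : ψ.IsPrimitive)
    {u : F} (hu : u ≠ 0) : χ u * χ (-u) * gaussSum χ ψ ^ 2 = Fintype.card F := by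
  have hneg : χ u * χ (-u) = χ (-1) := by
    rw [← map_mul, show u * -u = -1 * u ^ 2 by ring, complexQuadraticChar_mul_sq _ hu]
  have hsq : χ (-1) ^ 2 = 1 := by
    rw [← map_pow, complexQuadraticChar_sq (neg_ne_zero.mpr one_ne_zero)]
  rw [hneg, gaussSum_sq (complexQuadraticChar_ne_one hF) complexQuadraticChar_isQuadratic hψ,
    ← mul_assoc, ← sq, hsq, one_mul]

lemma sum_erase_zero_addChar_mul (hψ : ψ.IsPrimitive) (u : F) :
    ∑ z ∈ univ.erase 0, ψ (u * z) = (if u = 0 then (Fintype.card F : ℂ) else 0) - 1 := by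
  rw [← sum_addChar_mul hψ u, ← add_sum_erase univ _ (mem_univ 0), mul_zero, map_zero_eq_one,
    add_sub_cancel_left]

lemma sum_erase_zero_complexQuadraticChar_mul_addChar_mul (hF : ringChar F ≠ 2) (u : F) :
    ∑ z ∈ univ.erase 0, χ z * ψ (u * z) = χ u * gaussSum χ ψ := by
  rw [← sum_complexQuadraticChar_mul_addChar_mul hF, ← add_sum_erase univ _ (mem_univ 0),
    MulChar.map_zero, zero_mul, zero_add]

lemma sum_not_isSquare_sq_sub_mul_eq_sum_erase (a b c : F) :
    ∑ x : F, ∑ y : F, ∑ z : F,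
        (if ¬ IsSquare (y ^ 2 - x * z) then ψ (-(a * x) - b * y - c * z) else 0)
      = ∑ z ∈ univ.erase 0, ∑ x : F, ∑ y : F,
          (if ¬ IsSquare (y ^ 2 - x * z) then ψ (-(a * x) - b * y - c * z) else 0) := by
  rw [sum_congr rfl fun x _ => sum_comm, sum_comm, ← add_sum_erase univ _ (mem_univ 0)]
  have hzero : ∑ x : F, ∑ y : F,
      (if ¬ IsSquare (y ^ 2 - x * 0) then ψ (-(a * x) - b * y - c * 0) else 0) = 0 := by
    simp [IsSquare.sq]
  rw [hzero, zero_add]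

lemma sum_sum_not_isSquare_sq_sub_mul_of_eq_zero (hF : ringChar F ≠ 2) (hψ : ψ.IsPrimitive)
    (b c : F) {z : F} (hz : z ≠ 0) :
    ∑ x : F, ∑ y : F,
        (if ¬ IsSquare (y ^ 2 - x * z) then ψ (-(0 * x) - b * y - c * z) else 0)
      = ((Fintype.card F : ℂ) - 1) / 2 * (if b = 0 then (Fintype.card F : ℂ) else 0)
          * ψ (-c * z) := by
  rw [sum_sum_ite_sq_sub_mul_addChar ψ (fun t => ¬ IsSquare t) hz, zero_div,
    sum_not_isSquare_addChar_mul hF hψ]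
  simp only [neg_zero, zero_div, zero_mul, zero_add, if_true, MulChar.map_zero, sub_zero,
    sum_addChar_mul hψ, neg_eq_zero]
  rw [neg_mul]
  ring

lemma sum_sum_not_isSquare_sq_sub_mul_of_ne_zero (hF : ringChar F ≠ 2) (hψ : ψ.IsPrimitive)
    {a : F} (ha : a ≠ 0) (b c : F) {z : F} (hz : z ≠ 0) :
    ∑ x : F, ∑ y : F,
        (if ¬ IsSquare (y ^ 2 - x * z) then ψ (-(a * x) - b * y - c * z) else 0)
      = -((Fintype.card F : ℂ) / 2) * ψ ((b ^ 2 - 4 * a * c) / (4 * a) * z)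
          - gaussSum χ ψ / 2 * χ (-a) * (χ z * ψ ((b ^ 2 - 4 * a * c) / (4 * a) * z)) := by
  have hψz : ψ (-(c * z)) * ψ (-((-b) ^ 2 / (4 * (-a / z))))
      = ψ ((b ^ 2 - 4 * a * c) / (4 * a) * z) := by
    have h4 := four_ne_zero_of_ringChar_ne_two hF
    rw [← map_add_eq_mul]
    congr 1
    field_simp
    ring
  have hχz : χ (-a / z) = χ (-a) * χ z := by
    rw [show -a / z = -a * z * z⁻¹ ^ 2 by field_simp,
      complexQuadraticChar_mul_sq _ (inv_ne_zero hz), map_mul]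
  have hg := complexQuadraticChar_mul_neg_mul_gaussSum_sq hF hψ (div_ne_zero ha hz)
  rw [← neg_div] at hg
  rw [sum_sum_ite_sq_sub_mul_addChar ψ (fun t => ¬ IsSquare t) hz,
    sum_not_isSquare_addChar_mul hF hψ, if_neg (div_ne_zero ha hz),
    sum_addChar_quadratic hF hψ (div_ne_zero (neg_ne_zero.mpr ha) hz), ← hψz]
  linear_combination (-(1 / 2) * ψ (-(c * z)) * ψ (-((-b) ^ 2 / (4 * (-a / z))))) * hg
    + (-(1 / 2) * gaussSum χ ψ * ψ (-(c * z)) * ψ (-((-b) ^ 2 / (4 * (-a / z))))) * hχz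

lemma sum_not_isSquare_sq_sub_mul_of_eq_zero (hF : ringChar F ≠ 2) (hψ : ψ.IsPrimitive)
    (b c : F) :
    ∑ x : F, ∑ y : F, ∑ z : F,
        (if ¬ IsSquare (y ^ 2 - x * z) then ψ (-(0 * x) - b * y - c * z) else 0)
      = ((Fintype.card F : ℂ) - 1) / 2 * (if b = 0 then (Fintype.card F : ℂ) else 0)
          * ((if c = 0 then (Fintype.card F : ℂ) else 0) - 1) := by
  rw [sum_not_isSquare_sq_sub_mul_eq_sum_erase, sum_congr rfl fun z hz =>
    sum_sum_not_isSquare_sq_sub_mul_of_eq_zero hF hψ b c (ne_of_mem_erase hz), ← mul_sum,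
    sum_erase_zero_addChar_mul hψ, neg_eq_zero]

lemma sum_not_isSquare_sq_sub_mul_of_ne_zero (hF : ringChar F ≠ 2) (hψ : ψ.IsPrimitive)
    {a : F} (ha : a ≠ 0) (b c : F) :
    ∑ x : F, ∑ y : F, ∑ z : F,
        (if ¬ IsSquare (y ^ 2 - x * z) then ψ (-(a * x) - b * y - c * z) else 0)
      = -((Fintype.card F : ℂ) / 2)
          * ((if b ^ 2 - 4 * a * c = 0 then (Fintype.card F : ℂ) else 0) - 1
            + χ (b ^ 2 - 4 * a * c)) := by
  have h2 : (2 : F) ≠ 0 := Ring.two_ne_zero hF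
  have h4 := four_ne_zero_of_ringChar_ne_two hF
  have hΔ0 : (b ^ 2 - 4 * a * c) / (4 * a) = 0 ↔ b ^ 2 - 4 * a * c = 0 := by simp [h4, ha]
  have hχΔ : χ ((b ^ 2 - 4 * a * c) / (4 * a)) = χ a * χ (b ^ 2 - 4 * a * c) := by
    rw [show (b ^ 2 - 4 * a * c) / (4 * a) = a * (b ^ 2 - 4 * a * c) * (2 * a)⁻¹ ^ 2 by
        field_simp; ring,
      complexQuadraticChar_mul_sq _ (inv_ne_zero (mul_ne_zero h2 ha)), map_mul]
  rw [sum_not_isSquare_sq_sub_mul_eq_sum_erase, sum_congr rfl fun z hz =>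
      sum_sum_not_isSquare_sq_sub_mul_of_ne_zero hF hψ ha b c (ne_of_mem_erase hz),
    sum_sub_distrib, ← mul_sum, ← mul_sum, sum_erase_zero_addChar_mul hψ,
    sum_erase_zero_complexQuadraticChar_mul_addChar_mul hF, hχΔ]
  simp only [hΔ0]
  linear_combination (-(1 / 2) * χ (b ^ 2 - 4 * a * c)) *
    complexQuadraticChar_mul_neg_mul_gaussSum_sq hF hψ ha

end QuadraticChar

theorem stmt3_general {F : Type*} [Field F] [Fintype F] (hq : Odd (Fintype.card F))
    (ψ : AddChar F ℂ) (hψ : ψ ≠ 1)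
    (a b c : F) :
    (∑ x : F, ∑ y : F, ∑ z : F,
        if ¬ IsSquare (y ^ 2 - x * z)
        then ψ (-(a * x) - b * y - c * z) else 0) =
      if a = 0 ∧ b = 0 ∧ c = 0 then
        (Fintype.card F : ℂ) * ((Fintype.card F : ℂ) - 1) ^ 2 / 2
      else if b ^ 2 - 4 * a * c = 0 ∧ (a, c) ≠ ((0 : F), (0 : F)) then
        -((Fintype.card F : ℂ) * ((Fintype.card F : ℂ) - 1) / 2)
      else if IsSquare (b ^ 2 - 4 * a * c) then 0
      else (Fintype.card F : ℂ) := by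
  have hF : ringChar F ≠ 2 := fun h => by
    simpa [Nat.odd_iff.mp hq] using FiniteField.even_card_of_char_two h
  have hψ' := AddChar.IsPrimitive.of_ne_one hψ
  rcases eq_or_ne a 0 with rfl | ha
  · rw [sum_not_isSquare_sq_sub_mul_of_eq_zero hF hψ' b c]
    by_cases hb : b = 0
    · by_cases hc : c = 0 <;> simp [hb, hc] <;> ring
    · simp [hb, IsSquare.sq]
  · rw [sum_not_isSquare_sq_sub_mul_of_ne_zero hF hψ' ha b c]
    by_cases hD : b ^ 2 - 4 * a * c = 0
    · simp [ha, hD, MulChar.map_zero]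
      ring
    by_cases hsq : IsSquare (b ^ 2 - 4 * a * c)
    · simp [ha, hD, hsq, complexQuadraticChar_eq_one_of_isSquare hD hsq]
    · simp [ha, hD, hsq, complexQuadraticChar_eq_neg_one_of_not_isSquare hsq]
      ring

theorem stmt3 {F : Type*} [Field F] [Fintype F] (hq : Odd (Fintype.card F))
    (ψ : AddChar F ℂ) (hψ : ψ ≠ 1) (ξ : F) (hξ0 : ξ ≠ 0) (hξ : ¬ IsSquare ξ)
    (a b c : F) :
    (∑ x : F, ∑ y : F, ∑ z : F,
        if ¬ IsSquare (y ^ 2 - x * z)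
        then ψ (-(a * x) - b * y - c * z) else 0) =
      if a = 0 ∧ b = 0 ∧ c = 0 then
        (Fintype.card F : ℂ) * ((Fintype.card F : ℂ) - 1) ^ 2 / 2
      else if b ^ 2 - 4 * a * c = 0 ∧ (a, c) ≠ ((0 : F), (0 : F)) then
        -((Fintype.card F : ℂ) * ((Fintype.card F : ℂ) - 1) / 2)
      else if IsSquare (b ^ 2 - 4 * a * c) then 0
      else (Fintype.card F : ℂ) :=
  stmt3_general hq ψ hψ a b c
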